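/- arXiv:1810.00292 — 4 statements merged into one kernel-verified Lean document; each statement's English description precedes it below -/
import Mathlib

section
/- If a ≥ √(3(n-1)) with n ≥ 2, and the sequence (β_k) is defined by β_0 = 1/a and β_k = (1 + (n-1)β_{k-1}²)/(a - (n-1)β_{k-1}) − β_{k-1}, then 0 < β_k ≤ 1/a for all k ≥ 0. -/
theorem stmt_0 (n : ℕ) (hn : 2 ≤ n) (a : ℝ)
    (ha : Real.sqrt (3 * ((n : ℝ) - 1)) ≤ a)
    (β : ℕ → ℝ) (h0 : β 0 = 1 / a)
    (hrec : ∀ k : ℕ, β (k + 1) =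
      (1 + ((n : ℝ) - 1) * (β k) ^ 2) / (a - ((n : ℝ) - 1) * β k) - β k) :
    ∀ k : ℕ, 0 < β k ∧ β k ≤ 1 / a := by
  set m : ℝ := (n : ℝ) - 1 with hm
  have hm1 : 1 ≤ m := by
    have : (2 : ℝ) ≤ (n : ℝ) := by exact_mod_cast hn
    simp [hm]; linarith
  have hmnn : 0 ≤ 3 * m := by linarith
  have ha0 : 0 < a := by
    have h1 : Real.sqrt 3 ≤ Real.sqrt (3 * m) := by
      apply Real.sqrt_le_sqrt; linarith
    have h2 : (0:ℝ) < Real.sqrt 3 := by positivity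
    linarith
  have ha2 : 3 * m ≤ a ^ 2 := by
    have := Real.sq_sqrt hmnn
    nlinarith [Real.sqrt_nonneg (3 * m)]
  intro k
  induction k with
  | zero =>
    rw [h0]
    exact ⟨by positivity, le_refl _⟩
  | succ k ih =>
    obtain ⟨hpos, hle⟩ := ih
    have hab : a * β k ≤ 1 := by
      rw [le_div_iff₀ ha0] at hle
      linarith
    have hd : 0 < a - m * β k := by nlinarith
    have key : β (k + 1) = (1 - a * β k + 2 * m * (β k) ^ 2) / (a - m * β k) := by
      rw [hrec k]
      field_simp
      ring
    constructor
    · rw [key]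
      apply div_pos _ hd
      nlinarith
    · rw [key, div_le_div_iff₀ hd ha0]
      nlinarith [mul_nonneg (le_of_lt hpos) (sub_nonneg.mpr ha2),
        mul_nonneg (le_of_lt hpos) (sub_nonneg.mpr hab),
        mul_nonneg (by linarith : (0:ℝ) ≤ m) (mul_nonneg (le_of_lt hpos) (sub_nonneg.mpr hab))]
  done
end

section
/- Let n ≥ 2 and a ≥ 2√(n-1). Define β_0 = 1/a and β_k = (1 + (n-1)β_{k-1}²)/(a - (n-1)β_{k-1}) − β_{k-1}. Then the sequence (β_k) converges to b = (a − √(a² − 3(n-1)))/(3(n-1)). -/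
/-!
With `m = n - 1` and `s = √(a² - 3m)`, the limit `b = (a - s)/(3m)` is a fixed point of the
step map, and one step multiplies the error by `(2mβ - s)/(a - mβ)`. On the invariant interval
`[0, 1/a]` this factor has absolute value at most `s/a < 1`; the hypothesis `a² ≥ 4m` enters
exactly through `2m ≤ a s`, which makes the factor nonpositive there.
-/

open Filter Set Topology

lemma tendsto_of_dist_succ_le_mul {X : Type*} [PseudoMetricSpace X] {u : ℕ → X} {b : X}
    {c : ℝ} (hc₀ : 0 ≤ c) (hc₁ : c < 1)
    (h : ∀ k, dist (u (k + 1)) b ≤ c * dist (u k) b) :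
    Tendsto u atTop (𝓝 b) := by
  rw [tendsto_iff_dist_tendsto_zero]
  refine squeeze_zero (fun _ ↦ dist_nonneg)
    (fun k ↦ le_geom (u := fun k ↦ dist (u k) b) hc₀ k fun j _ ↦ h j) ?_
  simpa using (tendsto_pow_atTop_nhds_zero_of_lt_one hc₀ hc₁).mul_const (dist (u 0) b)

lemma two_mul_le_mul_sqrt_sq_sub {m a : ℝ} (hm : 0 ≤ m) (ha : 0 ≤ a) (h : 4 * m ≤ a ^ 2) :
    2 * m ≤ a * √(a ^ 2 - 3 * m) := by
  have hs := Real.sq_sqrt (show 0 ≤ a ^ 2 - 3 * m by linarith)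
  refine le_of_pow_le_pow_left₀ two_ne_zero (by positivity) ?_
  -- `(a s)² - (2m)² = (a² - 4m)(a² + m)`
  nlinarith [mul_nonneg (sub_nonneg.2 h) (add_nonneg (sq_nonneg a) hm)]

namespace BetaRecursion

variable {m a : ℝ}

noncomputable def step (m a x : ℝ) : ℝ := (1 + m * x ^ 2) / (a - m * x) - x

lemma step_eq {x : ℝ} (hx : a - m * x ≠ 0) :
    step m a x = (1 - a * x + 2 * m * x ^ 2) / (a - m * x) := by
  rw [step, div_sub' hx]
  ring_nf

lemma denom_pos (hm : 0 ≤ m) (ha : 0 < a) (hma : m < a ^ 2) {x : ℝ} (hx : x ≤ a⁻¹) :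
    0 < a - m * x := by
  have : m * a⁻¹ < a := by
    rw [← div_eq_mul_inv, div_lt_iff₀ ha]
    nlinarith
  nlinarith [mul_le_mul_of_nonneg_left hx hm]

lemma mapsTo_Icc (hm : 0 ≤ m) (ha : 0 < a) (h3m : 3 * m ≤ a ^ 2) :
    MapsTo (step m a) (Icc 0 a⁻¹) (Icc 0 a⁻¹) := by
  rintro x ⟨hx₀, hx₁⟩
  have hden := denom_pos hm ha (by nlinarith) hx₁
  have hax : a * x ≤ 1 := by rwa [← le_div_iff₀' ha, one_div]
  rw [mem_Icc, step_eq hden.ne']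
  constructor
  · exact div_nonneg (by nlinarith) hden.le
  · rw [← one_div, div_le_div_iff₀ hden ha]
    -- equivalent to `x (2 m (a x) + m - a²) ≤ 0`
    nlinarith [mul_le_mul_of_nonneg_left hax (mul_nonneg hm hx₀)]

/-- `(a - s)/(3m)` is a root of `3m t² - 2a t + 1`, which is what makes it a fixed point. -/
lemma step_sub_root {s x : ℝ} (hm : m ≠ 0) (hs : s ^ 2 = a ^ 2 - 3 * m)
    (hx : a - m * x ≠ 0) :
    step m a x - (a - s) / (3 * m) =
      (x - (a - s) / (3 * m)) * ((2 * m * x - s) / (a - m * x)) := by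
  have h3m : 3 * m ≠ 0 := mul_ne_zero three_ne_zero hm
  rw [step_eq hx, div_sub_div _ _ hx h3m, sub_div' h3m, div_mul_div_comm,
    mul_comm (3 * m) (a - m * x)]
  congr 1
  linear_combination hs

lemma abs_step_sub_root_le {s x : ℝ} (hm : 0 < m) (ha : 0 < a)
    (hs : s ^ 2 = a ^ 2 - 3 * m) (has : 2 * m ≤ a * s) (hx : x ∈ Icc 0 a⁻¹) :
    |step m a x - (a - s) / (3 * m)| ≤ s / a * |x - (a - s) / (3 * m)| := by
  obtain ⟨hx₀, hx₁⟩ := hx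
  have hden := denom_pos hm.le ha (by nlinarith) hx₁
  have hax : a * x ≤ 1 := by rwa [← le_div_iff₀' ha, one_div]
  have hsa : s ≤ a := by nlinarith
  have hfactor : |2 * m * x - s| ≤ s / a * (a - m * x) := by
    have hle : 2 * m * x ≤ s := by
      nlinarith [mul_le_mul_of_nonneg_left hax (mul_nonneg hm.le hx₀)]
    rw [abs_of_nonpos (by linarith), div_mul_eq_mul_div, le_div_iff₀ ha]
    nlinarith [mul_nonneg (mul_nonneg hm.le hx₀) (by linarith : 0 ≤ 2 * a - s)]
  rw [step_sub_root hm.ne' hs hden.ne', abs_mul, abs_div, abs_of_pos hden, mul_comm (s / a)]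
  exact mul_le_mul_of_nonneg_left ((div_le_iff₀ hden).2 hfactor) (abs_nonneg _)

theorem tendsto (hm : 0 < m) (ha : 0 < a) (h4m : 4 * m ≤ a ^ 2) {β : ℕ → ℝ}
    (h0 : β 0 = 1 / a) (hrec : ∀ k, β (k + 1) = step m a (β k)) :
    Tendsto β atTop (𝓝 ((a - √(a ^ 2 - 3 * m)) / (3 * m))) := by
  set s := √(a ^ 2 - 3 * m)
  have hs : s ^ 2 = a ^ 2 - 3 * m := Real.sq_sqrt (by linarith)
  have hsa : s / a < 1 := by
    rw [div_lt_one ha]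
    nlinarith [Real.sqrt_nonneg (a ^ 2 - 3 * m)]
  have hmem : ∀ k, β k ∈ Icc 0 a⁻¹ := by
    intro k
    induction k with
    | zero => simp [h0, ha.le]
    | succ k ih => exact hrec k ▸ mapsTo_Icc hm.le ha (by linarith) ih
  refine tendsto_of_dist_succ_le_mul (by positivity) hsa fun k ↦ ?_
  simp only [Real.dist_eq, hrec k]
  exact abs_step_sub_root_le hm ha hs
    (two_mul_le_mul_sqrt_sq_sub hm.le ha.le h4m) (hmem k)

end BetaRecursion

theorem stmt_4 (n : ℕ) (hn : 2 ≤ n) (a : ℝ)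
    (ha : 2 * Real.sqrt ((n : ℝ) - 1) ≤ a)
    (β : ℕ → ℝ) (h0 : β 0 = 1 / a)
    (hrec : ∀ k : ℕ, β (k + 1) =
      (1 + ((n : ℝ) - 1) * (β k) ^ 2) / (a - ((n : ℝ) - 1) * β k) - β k) :
    Filter.Tendsto β Filter.atTop
      (nhds ((a - Real.sqrt (a ^ 2 - 3 * ((n : ℝ) - 1))) / (3 * ((n : ℝ) - 1)))) := by
  have hm : (1 : ℝ) ≤ (n : ℝ) - 1 := by
    have : (2 : ℝ) ≤ n := by exact_mod_cast hn
    linarith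
  have hsqrt : 1 ≤ √((n : ℝ) - 1) := Real.one_le_sqrt.2 hm
  have h4m : 4 * ((n : ℝ) - 1) ≤ a ^ 2 := by
    nlinarith [Real.sq_sqrt (show (0 : ℝ) ≤ (n : ℝ) - 1 by linarith)]
  exact BetaRecursion.tendsto (by linarith) (by linarith) h4m h0 hrec
end

section
/- Let n ≥ 2, a ≥ √(3(n-1)), and β_0 = 1/a with β_k = (1 + (n-1)β_{k-1}²)/(a - (n-1)β_{k-1}) − β_{k-1}. Define ρ_k = (1 + (n-1)β_k²)/(a − (n-1)β_k). Then for all k ≥ 1, (ρ_k − ρ_{k-1})(β_k − β_{k-1}) ≥ 0; i.e., the map β ↦ (1 + (n-1)β²)/(a − (n-1)β) is monotone along the sequence. -/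
theorem stmt_6 (n : ℕ) (hn : 2 ≤ n) (a : ℝ)
    (ha : Real.sqrt (3 * ((n : ℝ) - 1)) ≤ a)
    (β : ℕ → ℝ) (h0 : β 0 = 1 / a)
    (hrec : ∀ k : ℕ, β (k + 1) =
      (1 + ((n : ℝ) - 1) * (β k) ^ 2) / (a - ((n : ℝ) - 1) * β k) - β k)
    (ρ : ℕ → ℝ)
    (hρ : ∀ k : ℕ, ρ k = (1 + ((n : ℝ) - 1) * (β k) ^ 2) / (a - ((n : ℝ) - 1) * β k)) :
    ∀ k : ℕ, 0 ≤ (ρ (k + 1) - ρ k) * (β (k + 1) - β k) := by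
  set m : ℝ := (n : ℝ) - 1 with hm
  have hm1 : (1 : ℝ) ≤ m := by
    have : (2 : ℝ) ≤ (n : ℝ) := by exact_mod_cast hn
    simp only [hm]; linarith
  have hm0 : (0 : ℝ) < m := by linarith
  have hsq : 3 * m ≤ a ^ 2 := by
    have h0' : (0:ℝ) ≤ 3 * m := by linarith
    have := Real.sq_sqrt h0'
    nlinarith [Real.sqrt_nonneg (3 * m)]
  have ha0 : 0 < a := by
    have := Real.sqrt_pos.mpr (show (0:ℝ) < 3 * m by linarith)
    linarith
  -- invariant
  have inv : ∀ k, 0 < β k ∧ β k ≤ 1 / a := by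
    intro k
    induction k with
    | zero => constructor <;> simp [h0] <;> positivity
    | succ j ih =>
      obtain ⟨hx0, hx1⟩ := ih
      set x := β j with hx
      have hax : a * x ≤ 1 := by
        rw [le_div_iff₀ ha0] at hx1; linarith
      have hden : 0 < a - m * x := by
        nlinarith [mul_le_mul_of_nonneg_left hax hm0.le]
      have hval : β (j+1) = (1 - a * x + 2 * m * x ^ 2) / (a - m * x) := by
        rw [hrec j, ← hx]
        field_simp
        ring
      constructor
      · rw [hval]
        apply div_pos _ hden
        nlinarith
      · rw [hval, div_le_div_iff₀ hden ha0]
        have hb : 2 * a * m * x ≤ 2 * m := by nlinarith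
        have hnn : 0 ≤ x * (a ^ 2 - m - 2 * a * m * x) :=
          mul_nonneg hx0.le (by linarith)
        nlinarith [hnn]
  intro k
  obtain ⟨hx0, hx1⟩ := inv (k+1)
  obtain ⟨hy0, hy1⟩ := inv k
  set x := β (k+1) with hxd
  set y := β k with hyd
  have hax : a * x ≤ 1 := by rw [le_div_iff₀ ha0] at hx1; linarith
  have hay : a * y ≤ 1 := by rw [le_div_iff₀ ha0] at hy1; linarith
  have hdenx : 0 < a - m * x := by
    nlinarith [mul_le_mul_of_nonneg_left hax hm0.le]
  have hdeny : 0 < a - m * y := by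
    nlinarith [mul_le_mul_of_nonneg_left hay hm0.le]
  have key : (ρ (k + 1) - ρ k) * (x - y)
      = m * (x - y) ^ 2 * (a * (x + y) + 1 - m * x * y) / ((a - m * x) * (a - m * y)) := by
    rw [hρ (k+1), hρ k, ← hxd, ← hyd]
    field_simp
    ring
  rw [key]
  have hxy : a ^ 2 * (x * y) ≤ 1 := by
    have := mul_le_mul hax hay (mul_pos ha0 hy0).le zero_le_one
    nlinarith
  have h3 : 3 * m * (x * y) ≤ a ^ 2 * (x * y) :=
    mul_le_mul_of_nonneg_right hsq (mul_pos hx0 hy0).le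
  have hbrack : 0 < a * (x + y) + 1 - m * x * y := by
    nlinarith [mul_pos ha0 hx0, mul_pos ha0 hy0]
  positivity
end

section
/- Let n ≥ 2, a ≥ 2√(n-1), β_k as above. Then for consecutive terms, the subsequence of even-indexed terms (β_{2k}) is monotonically non-increasing and the subsequence of odd-indexed terms (β_{2k+1}) is monotonically non-decreasing, with β_{2k+1} ≤ β_{2j} for all j, k. -/
/-!
With `m = n - 1` and `f x = (1 + m x²) / (a - m x) - x` we have `β (k + 1) = f (β k)`.
By `f x - f y = (y - x) (2 (a - m x)(a - m y) - a² - m) / ((a - m x)(a - m y))`, `f` reverses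
the order of `x ≤ y` as soon as `2 (a - m x)(a - m y) ≥ a² + m`. The smaller root `r` of
`3 m r² - 2 a r + 1` is a fixed point of `f`, and on `[0, 1/a]` the map `f` sends points on one
side of `r` to the other side. Put `b = f (1/a) = β 1` and `w = f b = β 2`: `f` is antitone on
`[b, r]` and on `[r, w]` and swaps these two intervals, so the odd terms stay in `[b, r]`, the
even ones (from `β 2` on) in `[r, w]`, and `f ∘ f` is monotone on both.
-/

open Set

section Alternating

variable {α : Type*} {f : α → α} {s t : Set α} {u : ℕ → α}

theorem alternating_mem_of_mapsTo (hu : ∀ k, u (k + 1) = f (u k)) (hst : MapsTo f s t)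
    (hts : MapsTo f t s) (h1 : u 1 ∈ s) : ∀ k, u (2 * k + 1) ∈ s ∧ u (2 * k + 2) ∈ t
  | 0 => ⟨h1, hu 1 ▸ hst h1⟩
  | k + 1 => by
    have hs : u (2 * k + 3) ∈ s :=
      hu (2 * k + 2) ▸ hts (alternating_mem_of_mapsTo hu hst hts h1 k).2
    exact ⟨hs, hu (2 * k + 3) ▸ hst hs⟩

theorem alternating_le_of_antitoneOn [Preorder α] (hu : ∀ k, u (k + 1) = f (u k))
    (hst : MapsTo f s t) (hts : MapsTo f t s) (hs : AntitoneOn f s) (ht : AntitoneOn f t)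
    (h1 : u 1 ∈ s) (h13 : u 1 ≤ u 3) :
    ∀ k, u (2 * k + 1) ≤ u (2 * k + 3) ∧ u (2 * k + 4) ≤ u (2 * k + 2) := by
  have hmem := alternating_mem_of_mapsTo hu hst hts h1
  have even_step : ∀ k, u (2 * k + 1) ≤ u (2 * k + 3) → u (2 * k + 4) ≤ u (2 * k + 2) :=
    fun k h => by
      rw [hu (2 * k + 3), hu (2 * k + 1)]
      exact hs (hmem k).1 (hmem (k + 1)).1 h
  intro k
  induction k with
  | zero => exact ⟨h13, even_step 0 h13⟩
  | succ k ih =>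
    have hodd : u (2 * (k + 1) + 1) ≤ u (2 * (k + 1) + 3) := by
      show u (2 * k + 2 + 1) ≤ u (2 * k + 4 + 1)
      rw [hu (2 * k + 4), hu (2 * k + 2)]
      exact ht (hmem (k + 1)).2 (hmem k).2 ih.2
    exact ⟨hodd, even_step (k + 1) hodd⟩

end Alternating

noncomputable def betaMap (m a x : ℝ) : ℝ := (1 + m * x ^ 2) / (a - m * x) - x

section BetaMap

variable {m a r c x y : ℝ}

theorem betaMap_sub_betaMap (hx : a - m * x ≠ 0) (hy : a - m * y ≠ 0) :
    betaMap m a x - betaMap m a y =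
      (y - x) * (2 * (a - m * x) * (a - m * y) - (a ^ 2 + m)) / ((a - m * x) * (a - m * y)) := by
  unfold betaMap
  field_simp
  ring

theorem betaMap_le_betaMap (hxy : x ≤ y) (hx : 0 < a - m * x) (hy : 0 < a - m * y)
    (h : a ^ 2 + m ≤ 2 * (a - m * x) * (a - m * y)) : betaMap m a y ≤ betaMap m a x := by
  have := betaMap_sub_betaMap hx.ne' hy.ne'
  have : 0 ≤ (y - x) * (2 * (a - m * x) * (a - m * y) - (a ^ 2 + m)) /
      ((a - m * x) * (a - m * y)) :=
    div_nonneg (mul_nonneg (by linarith) (by linarith)) (by positivity)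
  linarith

/-- `3 m r ^ 2 - 2 a r + 1 = 0` says that `r` is a fixed point of `betaMap m a`. -/
theorem betaMap_sub_of_fixed (hr : 3 * m * r ^ 2 - 2 * a * r + 1 = 0) (hx : a - m * x ≠ 0) :
    betaMap m a x - r = (x - r) * (2 * m * x + 3 * m * r - a) / (a - m * x) := by
  unfold betaMap
  field_simp
  linear_combination hr

theorem betaMap_le_of_fixed_le (hr : 3 * m * r ^ 2 - 2 * a * r + 1 = 0) (hrx : r ≤ x)
    (hx : 0 < a - m * x) (h : 2 * m * x + 3 * m * r ≤ a) : betaMap m a x ≤ r := by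
  have := betaMap_sub_of_fixed hr hx.ne'
  have : (x - r) * (2 * m * x + 3 * m * r - a) / (a - m * x) ≤ 0 :=
    div_nonpos_of_nonpos_of_nonneg (mul_nonpos_of_nonneg_of_nonpos (by linarith) (by linarith))
      hx.le
  linarith

theorem fixed_le_betaMap (hr : 3 * m * r ^ 2 - 2 * a * r + 1 = 0) (hxr : x ≤ r)
    (hx : 0 < a - m * x) (h : 2 * m * x + 3 * m * r ≤ a) : r ≤ betaMap m a x := by
  have := betaMap_sub_of_fixed hr hx.ne'
  have : 0 ≤ (x - r) * (2 * m * x + 3 * m * r - a) / (a - m * x) :=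
    div_nonneg (mul_nonneg_of_nonpos_of_nonpos (by linarith) (by linarith)) hx.le
  linarith

theorem exists_betaMap_fixed (ha : 0 < a) (h4 : 4 * m ≤ a ^ 2) :
    ∃ r, 3 * a * r ≤ 2 ∧ 3 * m * r ^ 2 - 2 * a * r + 1 = 0 := by
  set s := √(a ^ 2 - 3 * m)
  have hs : s ^ 2 = a ^ 2 - 3 * m := Real.sq_sqrt (by nlinarith [sq_nonneg a])
  have has : a ≤ 2 * s := by nlinarith [Real.sqrt_nonneg (a ^ 2 - 3 * m)]
  have has0 : 0 < a + s := by linarith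
  refine ⟨1 / (a + s), ?_, ?_⟩
  · rw [mul_one_div, div_le_iff₀ has0]
    linarith
  · field_simp
    linear_combination hs

theorem sub_div_pos (ha : 0 < a) (h4 : 4 * m ≤ a ^ 2) : 0 < a - m / a := by
  rw [sub_pos, div_lt_iff₀ ha]
  nlinarith

theorem sub_div_le_sub_mul (hm : 0 ≤ m) (hy : y ≤ 1 / a) : a - m / a ≤ a - m * y := by
  have := mul_le_mul_of_nonneg_left hy hm
  rw [mul_one_div] at this
  linarith

theorem sub_mul_pos (hm : 0 ≤ m) (ha : 0 < a) (h4 : 4 * m ≤ a ^ 2) (hy : y ≤ 1 / a) :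
    0 < a - m * y :=
  (sub_div_pos ha h4).trans_le (sub_div_le_sub_mul hm hy)

theorem betaMap_le_betaMap_of_le_inv (hm : 0 ≤ m) (ha : 0 < a) (h4 : 4 * m ≤ a ^ 2)
    (hc : a ^ 2 + m ≤ 2 * (a - m * c) * (a - m / a)) (hxc : x ≤ c) (hxy : x ≤ y)
    (hy : y ≤ 1 / a) :
    betaMap m a y ≤ betaMap m a x := by
  have hq := sub_div_pos ha h4
  have hc0 : 0 < a - m * c := by
    by_contra! h
    nlinarith [mul_nonpos_of_nonpos_of_nonneg h hq.le]
  have hcx : a - m * c ≤ a - m * x := by nlinarith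
  apply betaMap_le_betaMap hxy (by linarith) (sub_mul_pos hm ha h4 hy)
  calc a ^ 2 + m ≤ 2 * (a - m * c) * (a - m / a) := hc
    _ ≤ 2 * (a - m * x) * (a - m * y) := by
      gcongr
      exacts [by linarith, by linarith [sub_div_le_sub_mul hm hy]]

theorem antitoneOn_betaMap_Iic (hm : 0 ≤ m) (ha : 0 < a) (h4 : 4 * m ≤ a ^ 2)
    (hc : a ^ 2 + m ≤ 2 * (a - m * c) * (a - m / a)) (hc1 : c ≤ 1 / a) :
    AntitoneOn (betaMap m a) (Iic c) := fun _ hx _ hy hxy =>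
  betaMap_le_betaMap_of_le_inv hm ha h4 hc hx hxy (le_trans hy hc1)

theorem two_mul_add_three_mul_le (hm : 0 ≤ m) (ha : 0 < a) (h4 : 4 * m ≤ a ^ 2)
    (h3 : 3 * a * r ≤ 2) (hx : x ≤ 1 / a) : 2 * m * x + 3 * m * r ≤ a := by
  have hax : a * x ≤ 1 := by rwa [le_div_iff₀ ha, mul_comm] at hx
  nlinarith [mul_le_mul_of_nonneg_left hax hm, mul_le_mul_of_nonneg_left h3 hm]

theorem sq_add_le_of_three_mul_le (hm : 0 ≤ m) (ha : 0 < a) (h4 : 4 * m ≤ a ^ 2)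
    (h3 : 3 * a * r ≤ 2) : a ^ 2 + m ≤ 2 * (a - m * r) * (a - m / a) := by
  have hmr : 3 * a * (m * r) ≤ 2 * m := by nlinarith
  have key : 3 * a * (a * (a ^ 2 + m)) ≤ 3 * a * (2 * (a - m * r) * (a ^ 2 - m)) := by
    nlinarith [mul_nonneg (sub_nonneg.2 h4) (by nlinarith : 0 ≤ 3 * a ^ 2 - m),
      mul_le_mul_of_nonneg_right hmr (by nlinarith : 0 ≤ a ^ 2 - m)]
  have key' := le_of_mul_le_mul_left key (by positivity)
  rw [show a - m / a = (a ^ 2 - m) / a by field_simp]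
  rw [mul_div_assoc', le_div_iff₀ ha]
  linarith

theorem betaMap_inv (ha : 0 < a) (hm : m < a ^ 2) :
    betaMap m a (1 / a) = 2 * m / (a * (a ^ 2 - m)) := by
  have : a ^ 2 - m ≠ 0 := by linarith
  unfold betaMap
  field_simp
  ring

/-- Equality holds when `a² = 4 m`. -/
theorem sq_add_le_betaMap_betaMap_inv (hm : 0 ≤ m) (ha : 0 < a) (h4 : 4 * m ≤ a ^ 2) :
    a ^ 2 + m ≤ 2 * (a - m * betaMap m a (betaMap m a (1 / a))) * (a - m / a) := by
  have h1 : a ^ 2 - m ≠ 0 := by nlinarith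
  have h2 : 0 < a ^ 2 - 2 * m := by nlinarith
  have h3 : a ^ 2 + m ≠ 0 := by nlinarith
  have hden : a - m * (2 * m / (a * (a ^ 2 - m))) =
      (a ^ 2 - 2 * m) * (a ^ 2 + m) / (a * (a ^ 2 - m)) := by
    field_simp
    ring
  have e : 2 * (a - m * betaMap m a (betaMap m a (1 / a))) * (a - m / a) - (a ^ 2 + m) =
      (a ^ 2 - 4 * m) * (a ^ 4 - 3 * a ^ 2 * m + 4 * m ^ 2) / (a ^ 2 * (a ^ 2 - 2 * m)) := by
    rw [betaMap_inv ha (by nlinarith)]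
    unfold betaMap
    rw [hden]
    field_simp
    ring
  have : 0 ≤ (a ^ 2 - 4 * m) * (a ^ 4 - 3 * a ^ 2 * m + 4 * m ^ 2) /
      (a ^ 2 * (a ^ 2 - 2 * m)) := by
    apply div_nonneg (mul_nonneg (by linarith) ?_) (by positivity)
    nlinarith [sq_nonneg (a ^ 2 - 2 * m)]
  linarith

theorem betaMap_two_cycle {b w : ℝ} (hm : 0 ≤ m) (ha : 0 < a) (h4 : 4 * m ≤ a ^ 2)
    (h3 : 3 * a * r ≤ 2) (hr : 3 * m * r ^ 2 - 2 * a * r + 1 = 0)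
    (hb : betaMap m a (1 / a) = b) (hw : betaMap m a b = w) :
    b ≤ r ∧ w ≤ 1 / a ∧ MapsTo (betaMap m a) (Icc b r) (Icc r w) ∧
      MapsTo (betaMap m a) (Icc r w) (Icc b r) ∧ AntitoneOn (betaMap m a) (Icc b r) ∧
      AntitoneOn (betaMap m a) (Icc r w) := by
  have hr1 : r ≤ 1 / a := by
    rw [le_div_iff₀ ha]
    linarith
  have hden : ∀ {x}, x ≤ 1 / a → 0 < a - m * x := sub_mul_pos hm ha h4
  have hcross : ∀ {x}, x ≤ 1 / a → 2 * m * x + 3 * m * r ≤ a :=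
    two_mul_add_three_mul_le hm ha h4 h3
  have hbr : b ≤ r := hb ▸ betaMap_le_of_fixed_le hr hr1 (hden le_rfl) (hcross le_rfl)
  have hb0 : 0 ≤ b := by
    rw [← hb, betaMap_inv ha (by nlinarith)]
    have : 0 < a ^ 2 - m := by nlinarith
    positivity
  have hrw : r ≤ w :=
    hw ▸ fixed_le_betaMap hr hbr (hden (hbr.trans hr1)) (hcross (hbr.trans hr1))
  have hanti_r := antitoneOn_betaMap_Iic hm ha h4 (sq_add_le_of_three_mul_le hm ha h4 h3) hr1
  have hw1 : w ≤ 1 / a := by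
    have h0 : betaMap m a 0 = 1 / a := by simp [betaMap]
    exact h0 ▸ hw ▸ hanti_r (hb0.trans hbr) hbr hb0
  have hwc : a ^ 2 + m ≤ 2 * (a - m * w) * (a - m / a) :=
    hw ▸ hb ▸ sq_add_le_betaMap_betaMap_inv hm ha h4
  have hanti_w := antitoneOn_betaMap_Iic hm ha h4 hwc hw1
  refine ⟨hbr, hw1, ?_, ?_, hanti_r.mono Icc_subset_Iic_self, hanti_w.mono Icc_subset_Iic_self⟩
  · rintro x ⟨hbx, hxr⟩
    exact ⟨fixed_le_betaMap hr hxr (hden (hxr.trans hr1)) (hcross (hxr.trans hr1)),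
      hw ▸ hanti_r hbr hxr hbx⟩
  · rintro x ⟨hrx, hxw⟩
    exact ⟨hb ▸ betaMap_le_betaMap_of_le_inv hm ha h4 hwc hxw (hxw.trans hw1) le_rfl,
      betaMap_le_of_fixed_le hr hrx (hden (hxw.trans hw1)) (hcross (hxw.trans hw1))⟩

end BetaMap

theorem stmt_7 (n : ℕ) (hn : 2 ≤ n) (a : ℝ)
    (ha : 2 * Real.sqrt ((n : ℝ) - 1) ≤ a)
    (β : ℕ → ℝ) (h0 : β 0 = 1 / a)
    (hrec : ∀ k : ℕ, β (k + 1) =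
      (1 + ((n : ℝ) - 1) * (β k) ^ 2) / (a - ((n : ℝ) - 1) * β k) - β k) :
    (∀ k : ℕ, β (2 * (k + 1)) ≤ β (2 * k)) ∧
    (∀ k : ℕ, β (2 * k + 1) ≤ β (2 * (k + 1) + 1)) ∧
    (∀ j k : ℕ, β (2 * k + 1) ≤ β (2 * j)) := by
  set m : ℝ := (n : ℝ) - 1
  have hm : 1 ≤ m := by
    simp only [m, le_sub_iff_add_le]
    exact_mod_cast (by omega : 1 + 1 ≤ n)
  have hsq := Real.sq_sqrt (zero_le_one.trans hm)
  have ha0 : 0 < a := by linarith [Real.sqrt_pos.2 (zero_lt_one.trans_le hm)]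
  have h4 : 4 * m ≤ a ^ 2 := by nlinarith [Real.sqrt_nonneg m]
  obtain ⟨r, h3, hr⟩ := exists_betaMap_fixed ha0 h4
  have hβ : ∀ k, β (k + 1) = betaMap m a (β k) := hrec
  obtain ⟨h1r, h2, hst, hts, hs, ht⟩ := betaMap_two_cycle (zero_le_one.trans hm) ha0 h4 h3 hr
    (h0 ▸ (hβ 0).symm) (hβ 1).symm
  have h1 : β 1 ∈ Icc (β 1) r := ⟨le_rfl, h1r⟩
  have hmem := alternating_mem_of_mapsTo hβ hst hts h1
  have hmono := alternating_le_of_antitoneOn hβ hst hts hs ht h1 (hmem 1).1.1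
  refine ⟨?_, fun k => (hmono k).1, fun j k => (hmem k).1.2.trans ?_⟩
  · rintro (_ | k)
    · exact h0 ▸ h2
    · exact (hmono k).2
  · rcases j with _ | j
    · rw [h0, le_div_iff₀ ha0]
      linarith
    · exact (hmem j).2.1
end
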